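/- Let D be distributed according to the H-Multinomial distribution with parameters (s, q, λ). Then for every ε ∈ {0,1}^p, the probability that the activation pattern e(D) equals ε is ∏_{j=1}^p q_j^{ε_j} (1−q_j)^{1−ε_j}; in particular, the activation pattern is distributed as a vector of independent Bernoulli(q_j) variables. -/

import Mathlib

open scoped BigOperators

/-- Activation pattern: `act d j = 1` if word `j` appears in document `d`, else `0`. -/
def act {p : ℕ} (d : Fin p → ℕ) (j : Fin p) : ℕ := if 0 < d j then 1 else 0

/-- Repetition vector: occurrences beyond the first appearance. -/
def rep {p : ℕ} (d : Fin p → ℕ) (j : Fin p) : ℕ := d j - act d j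

/-- The hypergraph-induced multinomial (H-Multinomial) mass function with
parameters `(s, q, lam)`. -/
noncomputable def hPMF {p : ℕ} (s : ℕ) (q lam : Fin p → ℝ) (d : Fin p → ℕ) : ℝ :=
  if d = 0 then ∏ j, (1 - q j)
  else if (∑ j, rep d j) = s then
    ((s.factorial : ℝ) / ∏ j, ((rep d j).factorial : ℝ)) *
      (∏ j, (q j) ^ act d j * (1 - q j) ^ (1 - act d j)) *
      (∏ j, ((lam j * (act d j : ℝ)) / (∑ u, lam u * (act d u : ℝ))) ^ rep d j)
  else 0

/-! A document `d` with activation pattern `ε ≠ 0` is `ε + r` for a repetition vector `r` of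
total `s` supported on the support of `ε`. Its mass factors as the Bernoulli weight of `ε` times
the multinomial probability of `r` with cell probabilities `λ_j ε_j / ∑_u λ_u ε_u`, and these
multinomial probabilities sum to `1` by the multinomial theorem. The pattern `0` is carried by
`d = 0` alone. -/

open Finset
open scoped Nat

section Activation

variable {p : ℕ} {d ε r : Fin p → ℕ}

lemma act_add_rep (d : Fin p → ℕ) : act d + rep d = d := by
  funext j
  simp only [Pi.add_apply, rep, act]
  split_ifs <;> omega

lemma act_apply_eq_zero_iff {j : Fin p} : act d j = 0 ↔ d j = 0 := by
  simp [act]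

lemma act_eq_zero_iff : act d = 0 ↔ d = 0 := by
  simp only [funext_iff, Pi.zero_apply, act_apply_eq_zero_iff]

lemma act_add (hε : ∀ j, ε j ≤ 1) (hr : ∀ j, r j ≠ 0 → ε j ≠ 0) : act (ε + r) = ε := by
  funext j
  have := hε j
  have := hr j
  simp only [act, Pi.add_apply]
  split_ifs <;> omega

lemma rep_add (hε : ∀ j, ε j ≤ 1) (hr : ∀ j, r j ≠ 0 → ε j ≠ 0) : rep (ε + r) = r := by
  funext j
  simp [rep, act_add hε hr]

end Activation

lemma Nat.cast_multinomial {α K : Type*} [Field K] [CharZero K] (t : Finset α) (f : α → ℕ) :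
    (Nat.multinomial t f : K) = (∑ i ∈ t, f i)! / ∏ i ∈ t, ((f i)! : K) := by
  rw [eq_div_iff (prod_ne_zero_iff.2 fun i _ => by exact_mod_cast (f i).factorial_ne_zero),
    mul_comm]
  exact_mod_cast Nat.multinomial_spec t f

lemma sum_multinomial_mul_prod_div_sum_pow {α K : Type*} [DecidableEq α] [Field K]
    (t : Finset α) (n : ℕ) (w : α → K) (hw : ∑ i ∈ t, w i ≠ 0) :
    ∑ r ∈ piAntidiag t n, (Nat.multinomial t r : K) * ∏ i ∈ t, (w i / ∑ j ∈ t, w j) ^ r i = 1 := by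
  rw [← sum_pow_eq_sum_piAntidiag, ← sum_div, div_self hw, one_pow]

section HMultinomial

variable {p : ℕ} {s : ℕ} {q lam : Fin p → ℝ} {d ε r : Fin p → ℕ}

lemma hPMF_zero : hPMF s q lam 0 = ∏ j, (1 - q j) := if_pos rfl

lemma hPMF_eq_zero_of_sum_rep_ne (hd : d ≠ 0) (hs : ∑ j, rep d j ≠ s) : hPMF s q lam d = 0 := by
  rw [hPMF, if_neg hd, if_neg hs]

lemma hPMF_add (hε : ∀ j, ε j ≤ 1) (hr : ∀ j, r j ≠ 0 → ε j ≠ 0) (hs : ∑ j, r j = s) :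
    hPMF s q lam (ε + r) = (∏ j, q j ^ ε j * (1 - q j) ^ (1 - ε j)) *
      (Nat.multinomial univ r * ∏ j, (lam j * ε j / ∑ u, lam u * ε u) ^ r j) := by
  by_cases h0 : ε + r = 0
  · obtain ⟨rfl, rfl⟩ := add_eq_zero.1 h0
    subst hs
    simp [hPMF_zero, Nat.cast_multinomial]
  · rw [hPMF, if_neg h0, rep_add hε hr, if_pos hs, act_add hε hr, Nat.cast_multinomial, hs]
    ring

lemma tsum_ite_act_eq_zero :
    ∑' d, (if act d = 0 then hPMF s q lam d else 0) = ∏ j, (1 - q j) := by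
  rw [tsum_eq_single 0 fun d hd => if_neg (act_eq_zero_iff.not.2 hd),
    if_pos (act_eq_zero_iff.2 rfl), hPMF_zero]

lemma tsum_ite_act_eq (hε : ∀ j, ε j ≤ 1) (hε0 : ε ≠ 0) :
    ∑' d, (if act d = ε then hPMF s q lam d else 0) =
      ∑ r ∈ piAntidiag univ s with ∀ j, r j ≠ 0 → ε j ≠ 0, hPMF s q lam (ε + r) := by
  rw [tsum_eq_sum (s := image (ε + ·) {r ∈ piAntidiag univ s | ∀ j, r j ≠ 0 → ε j ≠ 0}),
    sum_image (add_right_injective ε).injOn]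
  · exact sum_congr rfl fun r hr => if_pos (act_add hε (mem_filter.1 hr).2)
  intro d hd
  by_contra hne
  obtain ⟨hact, hpos⟩ := ite_ne_right_iff.1 hne
  have hd0 : d ≠ 0 := fun h => hε0 (hact ▸ act_eq_zero_iff.2 h)
  have hs : ∑ j, rep d j = s := by_contra fun hs => hpos (hPMF_eq_zero_of_sum_rep_ne hd0 hs)
  have hsupp : ∀ j, rep d j ≠ 0 → ε j ≠ 0 := fun j hj => by
    rw [← hact, Ne, act_apply_eq_zero_iff]
    simp only [rep] at hj
    omega
  refine hd (mem_image.2 ⟨rep d, mem_filter.2 ⟨mem_piAntidiag.2 ⟨hs, by simp⟩, hsupp⟩, ?_⟩)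
  rw [← hact, act_add_rep]

end HMultinomial

theorem hPMF_activation_bernoulli_general (p : ℕ) (s : ℕ) (q lam : Fin p → ℝ)
    (hlam : ∀ j, 0 < lam j)
    (ε : Fin p → ℕ) (hε : ∀ j, ε j ≤ 1) :
    ∑' d : Fin p → ℕ, (if act d = ε then hPMF s q lam d else 0)
      = ∏ j, (q j) ^ ε j * (1 - q j) ^ (1 - ε j) := by
  rcases eq_or_ne ε 0 with rfl | hε0
  · simpa using tsum_ite_act_eq_zero
  obtain ⟨j₀, hj₀⟩ := Function.ne_iff.1 hε0
  have hΛ : ∑ u, lam u * ε u ≠ 0 := by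
    refine (sum_pos' (fun u _ => mul_nonneg (hlam u).le (Nat.cast_nonneg _))
      ⟨j₀, mem_univ _, ?_⟩).ne'
    exact mul_pos (hlam j₀) (by exact_mod_cast Nat.pos_of_ne_zero hj₀)
  have hsupp : ∀ r ∈ piAntidiag univ s,
      (Nat.multinomial univ r : ℝ) * ∏ j, (lam j * ε j / ∑ u, lam u * ε u) ^ r j ≠ 0 →
        ∀ j, r j ≠ 0 → ε j ≠ 0 :=
    fun r _ hr j hrj hεj =>
      hr (mul_eq_zero_of_right _ (prod_eq_zero (mem_univ j) (by simp [hεj, hrj])))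
  rw [tsum_ite_act_eq hε hε0,
    sum_congr rfl fun r hr =>
      hPMF_add hε (mem_filter.1 hr).2 (mem_piAntidiag.1 (mem_filter.1 hr).1).1,
    ← mul_sum, sum_filter_of_ne hsupp, sum_multinomial_mul_prod_div_sum_pow _ _ _ hΛ, mul_one]

/-- under the H-Multinomial law, the activation pattern `e(D)` equals a
given `ε ∈ {0,1}^p` with probability `∏_j q_j^{ε_j} (1-q_j)^{1-ε_j}`; i.e. it is
distributed as independent Bernoulli(q_j) coordinates. -/
theorem hPMF_activation_bernoulli (p : ℕ) (hp : 1 ≤ p) (s : ℕ) (q lam : Fin p → ℝ)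
    (hq : ∀ j, 0 < q j ∧ q j < 1) (hlam : ∀ j, 0 < lam j)
    (hlamsum : ∑ j, lam j = (p : ℝ))
    (ε : Fin p → ℕ) (hε : ∀ j, ε j ≤ 1) :
    ∑' d : Fin p → ℕ, (if act d = ε then hPMF s q lam d else 0)
      = ∏ j, (q j) ^ ε j * (1 - q j) ^ (1 - ε j) :=
  hPMF_activation_bernoulli_general p s q lam hlam ε hε
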